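/- Let L ⊆ ℝ^{m×n} be a linear subspace, D ∈ S^m_{++}, K° ∈ ℝ^{m×n}, C(K) := (K−K°)ᵀD(K−K°), p ∈ [1,∞], Σ̂ ∈ S₊ⁿ, r₁, r₂ ≥ 0, and 𝒞 := {Λ₁ ∈ S₊ⁿ : ‖Λ₁‖₁ ≤ r₁} × {Λ₂ ∈ S₊ⁿ : ‖Λ₂ − Σ̂‖_p ≤ r₂}. Let {η^i}_{i≥0} be positive step sizes and let sequences {K^i} ⊆ L and {Λ^i = (Λ₁^i, Λ₂^i)} satisfy Λ⁰ = (0, Σ̂), K^i ∈ argmin_{K∈L} tr((Λ₁^i+Λ₂^i)C(K)), and Λ^{i+1} = Π_𝒞(Λ^i + η^i(C(K^i), C(K^i))), where Π_𝒞 is the Frobenius-orthogonal projection onto 𝒞. Then Λ₂^i ⪰ Σ̂ for all i ≥ 0; moreover, if Σ̂ ≻ 0, then Λ₁^i + Λ₂^i ≻ 0 at every iterate. -/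

import Mathlib

open Matrix
open scoped ENNReal

noncomputable def singVals {n : ℕ} (A : Matrix (Fin n) (Fin n) ℝ) : Fin n → ℝ :=
  fun i => Real.sqrt ((show (Aᵀ * A).IsHermitian by
    simpa [Matrix.conjTranspose_eq_transpose_of_trivial] using
      Matrix.isHermitian_conjTranspose_mul_self A).eigenvalues i)

noncomputable def schattenNorm {n : ℕ} (p : ℝ≥0∞) (A : Matrix (Fin n) (Fin n) ℝ) : ℝ :=
  if p = ⊤ then ⨆ i, singVals A i
  else (∑ i, singVals A i ^ p.toReal) ^ (1 / p.toReal)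

/-!
By induction `Λ₂ⁱ ⪰ Σ̂`: the point `E = Λ₂ⁱ + ηⁱ C(Kⁱ)` satisfies `E ⪰ Σ̂` because `C(Kⁱ) ⪰ 0`,
and `Λ₂ⁱ⁺¹` is the Frobenius-nearest point to `E` of `{M ⪰ 0 : ‖M - Σ̂‖_p ≤ r₂}`. Split
`Λ₂ⁱ⁺¹ - Σ̂ = P - N` into its spectral positive and negative parts, so `P, N ⪰ 0` and `PN = 0`.
The singular values of `P` are dominated by those of `P - N`, so `Σ̂ + P` is feasible, and with
`G = E - Σ̂ ⪰ 0` one has `‖P - N - G‖² = ‖P - G‖² + 2 tr(GN) + ‖N‖²` where `tr(GN) ≥ 0`.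
Minimality therefore forces `N = 0`. The second claim adds `Σ̂ ≻ 0` to `Λ₁ⁱ ⪰ 0` and `Λ₂ⁱ - Σ̂ ⪰ 0`.
-/

namespace Matrix

variable {ι : Type*} [Fintype ι] [DecidableEq ι]

theorem trace_mul_nonneg_of_posSemidef {A B : Matrix ι ι ℝ} (hA : A.PosSemidef)
    (hB : B.PosSemidef) : 0 ≤ (A * B).trace := by
  open scoped MatrixOrder in
  obtain ⟨C, rfl⟩ := CStarAlgebra.nonneg_iff_eq_star_mul_self.mp hB.nonneg
  rw [star_eq_conjTranspose, ← Matrix.mul_assoc, trace_mul_cycle]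
  exact (hA.mul_mul_conjTranspose_same C).trace_nonneg

theorem eq_zero_of_trace_sub_sub_sq_le {G P N : Matrix ι ι ℝ} (hG : G.PosSemidef)
    (hP : P.IsHermitian) (hN : N.PosSemidef) (hPN : P * N = 0)
    (h : ((P - N - G)ᵀ * (P - N - G)).trace ≤ ((P - G)ᵀ * (P - G)).trace) : N = 0 := by
  have hsymm {A : Matrix ι ι ℝ} (hA : A.IsHermitian) : Aᵀ = A := by
    simpa [conjTranspose_eq_transpose_of_trivial] using hA.eq
  have hexpand : ((P - N - G)ᵀ * (P - N - G)).trace =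
      ((P - G)ᵀ * (P - G)).trace + 2 * (G * N).trace + (Nᵀ * N).trace := by
    have hmul : (P - N - G)ᵀ * (P - N - G) =
        (P - G)ᵀ * (P - G) + (G * N + N * G) + Nᵀ * N - (P * N + N * P) := by
      simp only [transpose_sub, hsymm hP, hsymm hG.isHermitian, hsymm hN.isHermitian]
      noncomm_ring
    rw [hmul, trace_sub, trace_add, trace_add, trace_add, trace_add, trace_mul_comm N G,
      trace_mul_comm N P, hPN, trace_zero]
    ring
  have hGN := trace_mul_nonneg_of_posSemidef hG hN
  have hNN : 0 ≤ (Nᵀ * N).trace := by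
    simpa [conjTranspose_eq_transpose_of_trivial] using
      (posSemidef_conjTranspose_mul_self N).trace_nonneg
  exact trace_conjTranspose_mul_self_eq_zero_iff.mp (by
    simpa [conjTranspose_eq_transpose_of_trivial] using (show (Nᵀ * N).trace = 0 by linarith))

theorem IsHermitian.exists_orthogonal_conj_diagonal {H : Matrix ι ι ℝ} (hH : H.IsHermitian) :
    ∃ U : Matrix ι ι ℝ, Uᵀ * U = 1 ∧ H = U * diagonal hH.eigenvalues * Uᵀ := by
  refine ⟨hH.eigenvectorUnitary, Unitary.coe_star_mul_self hH.eigenvectorUnitary, ?_⟩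
  convert hH.spectral_theorem using 1
  rw [Unitary.conjStarAlgAut_apply]
  rfl

open Polynomial in
theorem IsHermitian.map_eigenvalues_eq_of_eq_orthogonal_conj_diagonal {A U : Matrix ι ι ℝ}
    (hA : A.IsHermitian) (hU : Uᵀ * U = 1) {d : ι → ℝ} (hAd : A = U * diagonal d * Uᵀ) :
    Finset.univ.val.map hA.eigenvalues = Finset.univ.val.map d := by
  have hchar : A.charpoly = ∏ i, (X - C (d i)) := by
    rw [hAd, Matrix.mul_assoc, charpoly_mul_comm, Matrix.mul_assoc, hU, Matrix.mul_one,
      charpoly_diagonal]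
  have hroots := hA.roots_charpoly_eq_eigenvalues
  rw [hchar, roots_prod _ _ (Finset.prod_ne_zero_iff.mpr fun i _ => X_sub_C_ne_zero (d i))]
    at hroots
  simpa using hroots.symm

end Matrix

section SchattenNorm

variable {n : ℕ}

theorem map_singVals_orthogonal_conj_diagonal {U : Matrix (Fin n) (Fin n) ℝ} (hU : Uᵀ * U = 1)
    (d : Fin n → ℝ) :
    Finset.univ.val.map (singVals (U * diagonal d * Uᵀ)) = Finset.univ.val.map fun i => |d i| := by
  set A := U * diagonal d * Uᵀ
  have hAA : Aᵀ * A = U * diagonal (fun i => d i ^ 2) * Uᵀ := by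
    calc Aᵀ * A = U * diagonal d * (Uᵀ * U) * diagonal d * Uᵀ := by
          simp only [A, transpose_mul, transpose_transpose, diagonal_transpose, Matrix.mul_assoc]
      _ = U * diagonal (fun i => d i ^ 2) * Uᵀ := by
          rw [hU, Matrix.mul_one, Matrix.mul_assoc U, diagonal_mul_diagonal]
          simp only [sq]
  have hAAh : (Aᵀ * A).IsHermitian := by
    simpa [conjTranspose_eq_transpose_of_trivial] using isHermitian_conjTranspose_mul_self A
  calc Finset.univ.val.map (singVals A)
      = (Finset.univ.val.map hAAh.eigenvalues).map Real.sqrt := by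
        rw [Multiset.map_map]; rfl
    _ = Finset.univ.val.map fun i => |d i| := by
        rw [hAAh.map_eigenvalues_eq_of_eq_orthogonal_conj_diagonal hU hAA, Multiset.map_map]
        simp only [Function.comp_def, Real.sqrt_sq_eq_abs]

theorem schattenNorm_eq_of_map_singVals (p : ℝ≥0∞) {A : Matrix (Fin n) (Fin n) ℝ}
    {s : Fin n → ℝ} (h : Finset.univ.val.map (singVals A) = Finset.univ.val.map s) :
    schattenNorm p A =
      if p = ⊤ then ⨆ i, s i else (∑ i, s i ^ p.toReal) ^ (1 / p.toReal) := by
  have hrange : Set.range (singVals A) = Set.range s := by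
    ext x
    simpa using congrArg (x ∈ ·) h
  have hsum : ∑ i, singVals A i ^ p.toReal = ∑ i, s i ^ p.toReal := by
    simpa [Finset.sum_eq_multiset_sum, Multiset.map_map, Function.comp_def] using
      congrArg (fun m => (m.map (· ^ p.toReal)).sum) h
  simp only [schattenNorm, ← sSup_range, hrange, hsum]

theorem schattenNorm_orthogonal_conj_diagonal_le (p : ℝ≥0∞) {U : Matrix (Fin n) (Fin n) ℝ}
    (hU : Uᵀ * U = 1) {d e : Fin n → ℝ} (hde : ∀ i, |d i| ≤ |e i|) :
    schattenNorm p (U * diagonal d * Uᵀ) ≤ schattenNorm p (U * diagonal e * Uᵀ) := by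
  rw [schattenNorm_eq_of_map_singVals p (map_singVals_orthogonal_conj_diagonal hU d),
    schattenNorm_eq_of_map_singVals p (map_singVals_orthogonal_conj_diagonal hU e)]
  split_ifs
  · exact ciSup_mono (Set.finite_range _).bddAbove hde
  · exact Real.rpow_le_rpow (by positivity)
      (Finset.sum_le_sum fun i _ => Real.rpow_le_rpow (abs_nonneg _) (hde i) p.toReal_nonneg)
      (by positivity)

theorem Matrix.IsHermitian.exists_posSemidef_sub_posSemidef {H : Matrix (Fin n) (Fin n) ℝ}
    (hH : H.IsHermitian) :
    ∃ P N : Matrix (Fin n) (Fin n) ℝ, P.PosSemidef ∧ N.PosSemidef ∧ H = P - N ∧ P * N = 0 ∧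
      ∀ p, schattenNorm p P ≤ schattenNorm p H := by
  obtain ⟨U, hU, hHU⟩ := hH.exists_orthogonal_conj_diagonal
  set l := hH.eigenvalues
  have hconj {d : Fin n → ℝ} (hd : ∀ i, 0 ≤ d i) : (U * diagonal d * Uᵀ).PosSemidef := by
    simpa [conjTranspose_eq_transpose_of_trivial] using
      (PosSemidef.diagonal hd).mul_mul_conjTranspose_same U
  refine ⟨U * diagonal l⁺ * Uᵀ, U * diagonal l⁻ * Uᵀ, hconj fun i => posPart_nonneg (l i),
    hconj fun i => negPart_nonneg (l i), ?_, ?_, fun p => ?_⟩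
  · rw [hHU, ← Matrix.sub_mul, ← Matrix.mul_sub, diagonal_sub]
    congr
    exact (posPart_sub_negPart l).symm
  · calc U * diagonal l⁺ * Uᵀ * (U * diagonal l⁻ * Uᵀ)
        = U * diagonal (l⁺ * l⁻) * Uᵀ := by
          simp only [Matrix.mul_assoc]
          rw [← Matrix.mul_assoc Uᵀ, hU, Matrix.one_mul, ← Matrix.mul_assoc (diagonal _),
            diagonal_mul_diagonal]
          rfl
      _ = 0 := by
          have hl : l⁺ * l⁻ = 0 := by
            ext i
            rcases le_total (l i) 0 with h | h <;> simp [h]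
          simp [hl]
  · conv_rhs => rw [hHU]
    refine schattenNorm_orthogonal_conj_diagonal_le p hU fun i => ?_
    rw [Pi.posPart_apply, abs_of_nonneg (posPart_nonneg (l i))]
    exact sup_le (le_abs_self _) (abs_nonneg _)

end SchattenNorm

theorem posSemidef_sub_of_isNearest_in_schattenBall {n : ℕ} (p : ℝ≥0∞) {r : ℝ}
    {S E Y : Matrix (Fin n) (Fin n) ℝ} (hS : S.PosSemidef) (hES : (E - S).PosSemidef)
    (hY : Y.PosSemidef) (hYr : schattenNorm p (Y - S) ≤ r)
    (hnearest : ∀ M : Matrix (Fin n) (Fin n) ℝ, M.PosSemidef → schattenNorm p (M - S) ≤ r →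
      ((Y - E)ᵀ * (Y - E)).trace ≤ ((M - E)ᵀ * (M - E)).trace) :
    (Y - S).PosSemidef := by
  obtain ⟨P, N, hP, hN, hYPN, hPN, hPnorm⟩ :=
    (hY.isHermitian.sub hS.isHermitian).exists_posSemidef_sub_posSemidef
  have hfeasible := hnearest (S + P) (hS.add hP)
    (by rw [add_sub_cancel_left]; exact (hPnorm p).trans hYr)
  rw [show Y - E = P - N - (E - S) by rw [← hYPN]; abel,
    show S + P - E = P - (E - S) by abel] at hfeasible
  rw [hYPN, eq_zero_of_trace_sub_sub_sq_le hES hP.isHermitian hN hPN hfeasible, sub_zero]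
  exact hP

theorem stmt18_general {m n : ℕ} (p : ℝ≥0∞)
    (D : Matrix (Fin m) (Fin m) ℝ) (hD : D.PosDef) (Kor : Matrix (Fin m) (Fin n) ℝ)
    (Cmap : Matrix (Fin m) (Fin n) ℝ → Matrix (Fin n) (Fin n) ℝ)
    (hCmap : ∀ K, Cmap K = (K - Kor)ᵀ * D * (K - Kor))
    (Sighat : Matrix (Fin n) (Fin n) ℝ) (hSig : Sighat.PosSemidef)
    (r₁ r₂ : ℝ)
    (η : ℕ → ℝ) (hη : ∀ i, 0 < η i)
    (K : ℕ → Matrix (Fin m) (Fin n) ℝ) (Λ₁ Λ₂ : ℕ → Matrix (Fin n) (Fin n) ℝ)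
    -- initialization `Λ⁰ = (0, Σ̂)`
    (hinit₁ : Λ₁ 0 = 0) (hinit₂ : Λ₂ 0 = Sighat)
    -- `Λ^{i+1} ∈ 𝒞` ...
    (hmem : ∀ i, (Λ₁ (i + 1)).PosSemidef ∧ schattenNorm 1 (Λ₁ (i + 1)) ≤ r₁ ∧
      (Λ₂ (i + 1)).PosSemidef ∧ schattenNorm p (Λ₂ (i + 1) - Sighat) ≤ r₂)
    -- ... is the Frobenius-orthogonal projection of `Λⁱ + ηⁱ (C(Kⁱ), C(Kⁱ))` onto `𝒞`
    (hproj : ∀ i, ∀ M₁ M₂ : Matrix (Fin n) (Fin n) ℝ,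
      M₁.PosSemidef → schattenNorm 1 M₁ ≤ r₁ →
      M₂.PosSemidef → schattenNorm p (M₂ - Sighat) ≤ r₂ →
      ((Λ₁ (i + 1) - (Λ₁ i + η i • Cmap (K i)))ᵀ *
          (Λ₁ (i + 1) - (Λ₁ i + η i • Cmap (K i)))).trace +
        ((Λ₂ (i + 1) - (Λ₂ i + η i • Cmap (K i)))ᵀ *
          (Λ₂ (i + 1) - (Λ₂ i + η i • Cmap (K i)))).trace ≤
      ((M₁ - (Λ₁ i + η i • Cmap (K i)))ᵀ * (M₁ - (Λ₁ i + η i • Cmap (K i)))).trace +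
        ((M₂ - (Λ₂ i + η i • Cmap (K i)))ᵀ * (M₂ - (Λ₂ i + η i • Cmap (K i)))).trace) :
    (∀ i, (Λ₂ i - Sighat).PosSemidef) ∧
    (Sighat.PosDef → ∀ i, (Λ₁ i + Λ₂ i).PosDef) := by
  have hC (K : Matrix (Fin m) (Fin n) ℝ) : (Cmap K).PosSemidef := by
    simpa [hCmap, conjTranspose_eq_transpose_of_trivial] using
      hD.posSemidef.conjTranspose_mul_mul_same (K - Kor)
  have hΛ₁ : ∀ i, (Λ₁ i).PosSemidef
    | 0 => hinit₁ ▸ PosSemidef.zero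
    | i + 1 => (hmem i).1
  have hΛ₂ : ∀ i, (Λ₂ i - Sighat).PosSemidef := by
    intro i
    induction i with
    | zero => simpa [hinit₂] using PosSemidef.zero
    | succ i ih =>
      refine posSemidef_sub_of_isNearest_in_schattenBall p (E := Λ₂ i + η i • Cmap (K i)) hSig ?_
        (hmem i).2.2.1 (hmem i).2.2.2 fun M hM hMr => ?_
      · rw [add_sub_right_comm]
        exact ih.add ((hC (K i)).smul (hη i).le)
      · linarith [hproj i (Λ₁ (i + 1)) M (hmem i).1 (hmem i).2.1 hM hMr]
  refine ⟨hΛ₂, fun hSig' i => ?_⟩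
  convert hSig'.add_posSemidef ((hΛ₁ i).add (hΛ₂ i)) using 1
  abel

/-- Iterates of the dual projected subgradient method: starting from
`Λ⁰ = (0, Σ̂)`, with `Kⁱ` a minimizer of `K ↦ tr((Λ₁ⁱ+Λ₂ⁱ)C(K))` over `L` and
`Λ^{i+1}` the Frobenius projection of `Λⁱ + ηⁱ(C(Kⁱ), C(Kⁱ))` onto
`𝒞 = {Λ₁ ⪰ 0 : ‖Λ₁‖₁ ≤ r₁} × {Λ₂ ⪰ 0 : ‖Λ₂-Σ̂‖_p ≤ r₂}`, we have `Λ₂ⁱ ⪰ Σ̂` for all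
`i`; moreover, if `Σ̂ ≻ 0` then `Λ₁ⁱ + Λ₂ⁱ ≻ 0` at every iterate. -/
theorem stmt18 {m n : ℕ} (p : ℝ≥0∞) (hp : 1 ≤ p)
    (L : Submodule ℝ (Matrix (Fin m) (Fin n) ℝ))
    (D : Matrix (Fin m) (Fin m) ℝ) (hD : D.PosDef) (Kor : Matrix (Fin m) (Fin n) ℝ)
    (Cmap : Matrix (Fin m) (Fin n) ℝ → Matrix (Fin n) (Fin n) ℝ)
    (hCmap : ∀ K, Cmap K = (K - Kor)ᵀ * D * (K - Kor))
    (Sighat : Matrix (Fin n) (Fin n) ℝ) (hSig : Sighat.PosSemidef)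
    (r₁ r₂ : ℝ) (hr₁ : 0 ≤ r₁) (hr₂ : 0 ≤ r₂)
    (η : ℕ → ℝ) (hη : ∀ i, 0 < η i)
    (K : ℕ → Matrix (Fin m) (Fin n) ℝ) (Λ₁ Λ₂ : ℕ → Matrix (Fin n) (Fin n) ℝ)
    -- initialization `Λ⁰ = (0, Σ̂)`
    (hinit₁ : Λ₁ 0 = 0) (hinit₂ : Λ₂ 0 = Sighat)
    -- `Kⁱ ∈ argmin_{K ∈ L} tr((Λ₁ⁱ+Λ₂ⁱ)C(K))`
    (hK : ∀ i, K i ∈ L ∧ ∀ K' ∈ L,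
      ((Λ₁ i + Λ₂ i) * Cmap (K i)).trace ≤ ((Λ₁ i + Λ₂ i) * Cmap K').trace)
    -- `Λ^{i+1} ∈ 𝒞` ...
    (hmem : ∀ i, (Λ₁ (i + 1)).PosSemidef ∧ schattenNorm 1 (Λ₁ (i + 1)) ≤ r₁ ∧
      (Λ₂ (i + 1)).PosSemidef ∧ schattenNorm p (Λ₂ (i + 1) - Sighat) ≤ r₂)
    -- ... is the Frobenius-orthogonal projection of `Λⁱ + ηⁱ (C(Kⁱ), C(Kⁱ))` onto `𝒞`
    (hproj : ∀ i, ∀ M₁ M₂ : Matrix (Fin n) (Fin n) ℝ,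
      M₁.PosSemidef → schattenNorm 1 M₁ ≤ r₁ →
      M₂.PosSemidef → schattenNorm p (M₂ - Sighat) ≤ r₂ →
      ((Λ₁ (i + 1) - (Λ₁ i + η i • Cmap (K i)))ᵀ *
          (Λ₁ (i + 1) - (Λ₁ i + η i • Cmap (K i)))).trace +
        ((Λ₂ (i + 1) - (Λ₂ i + η i • Cmap (K i)))ᵀ *
          (Λ₂ (i + 1) - (Λ₂ i + η i • Cmap (K i)))).trace ≤
      ((M₁ - (Λ₁ i + η i • Cmap (K i)))ᵀ * (M₁ - (Λ₁ i + η i • Cmap (K i)))).trace +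
        ((M₂ - (Λ₂ i + η i • Cmap (K i)))ᵀ * (M₂ - (Λ₂ i + η i • Cmap (K i)))).trace) :
    (∀ i, (Λ₂ i - Sighat).PosSemidef) ∧
    (Sighat.PosDef → ∀ i, (Λ₁ i + Λ₂ i).PosDef) :=
  stmt18_general p D hD Kor Cmap hCmap Sighat hSig r₁ r₂ η hη K Λ₁ Λ₂ hinit₁ hinit₂ hmem hproj
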